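/- The language { a^{f n} : n ∈ ℕ } over the one-letter alphabet {a}, where f is the Fibonacci sequence with f 0 = f 1 = 1, is not context-free. -/

import Mathlib

/-!
A context-free language containing arbitrarily long words has a parse tree so large that some
nonterminal repeats along a path; choosing the tree of minimal size, the segment between the two
occurrences yields a nonempty word, and repeating it `k` times shows that the word lengths contain
an infinite arithmetic progression `a + k d` with `d > 0`. The Fibonacci numbers contain no such
progression: once their gaps exceed `d`, some term of the progression falls strictly inside a gap.
-/

def fib1 : ℕ → ℕ
  | 0 => 1
  | 1 => 1
  | n + 2 => fib1 (n + 1) + fib1 n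

open Filter

namespace ContextFreeGrammar

variable {T : Type*} {g : ContextFreeGrammar T}

/-- `ParseForest g α m s`: `α` derives a terminal word of length `m` through a derivation forest
with `s` rule applications. -/
inductive ParseForest (g : ContextFreeGrammar T) : List (Symbol T g.NT) → ℕ → ℕ → Prop
  | nil : ParseForest g [] 0 0
  | terminal {α m s} (t : T) (h : ParseForest g α m s) :
      ParseForest g (.terminal t :: α) (m + 1) s
  | nonterminal {α n m₁ s₁ m₂ s₂} (h₁ : ParseForest g [.nonterminal n] m₁ s₁)
      (h₂ : ParseForest g α m₂ s₂) :
      ParseForest g (.nonterminal n :: α) (m₁ + m₂) (s₁ + s₂)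
  | node {r m s} (hr : r ∈ g.rules) (h : ParseForest g r.output m s) :
      ParseForest g [.nonterminal r.input] m (s + 1)

/-- A `ParseForest` in which exactly one leaf is left as the nonterminal `N`; the two counts
ignore this hole. -/
inductive ParseContext (g : ContextFreeGrammar T) :
    List (Symbol T g.NT) → g.NT → ℕ → ℕ → Prop
  | hole (N) : ParseContext g [.nonterminal N] N 0 0
  | terminal {α N m s} (t : T) (h : ParseContext g α N m s) :
      ParseContext g (.terminal t :: α) N (m + 1) s
  | left {α n N m₁ s₁ m₂ s₂} (h₁ : ParseContext g [.nonterminal n] N m₁ s₁)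
      (h₂ : ParseForest g α m₂ s₂) :
      ParseContext g (.nonterminal n :: α) N (m₁ + m₂) (s₁ + s₂)
  | right {α n N m₁ s₁ m₂ s₂} (h₁ : ParseForest g [.nonterminal n] m₁ s₁)
      (h₂ : ParseContext g α N m₂ s₂) :
      ParseContext g (.nonterminal n :: α) N (m₁ + m₂) (s₁ + s₂)
  | node {r N m s} (hr : r ∈ g.rules) (h : ParseContext g r.output N m s) :
      ParseContext g [.nonterminal r.input] N m (s + 1)

namespace ParseForest

theorem of_eq {α m s m' s'} (h : ParseForest g α m s) (hm : m = m') (hs : s = s') :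
    ParseForest g α m' s' :=
  hm ▸ hs ▸ h

theorem append {α β m₁ s₁ m₂ s₂} (h₁ : ParseForest g α m₁ s₁) (h₂ : ParseForest g β m₂ s₂) :
    ParseForest g (α ++ β) (m₁ + m₂) (s₁ + s₂) := by
  induction h₁ with
  | nil => simpa using h₂
  | terminal t _ ih => exact (ih.terminal t).of_eq (by omega) rfl
  | nonterminal h _ _ ih => exact (h.nonterminal ih).of_eq (by omega) (by omega)
  | node hr h _ => exact (node hr h).nonterminal h₂

theorem cons_inv {x α m s} (h : ParseForest g (x :: α) m s) :
    ∃ m₁ s₁ m₂ s₂, ParseForest g [x] m₁ s₁ ∧ ParseForest g α m₂ s₂ ∧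
      m = m₁ + m₂ ∧ s = s₁ + s₂ := by
  cases h with
  | terminal t h => exact ⟨1, 0, _, _, nil.terminal t, h, by omega, by omega⟩
  | nonterminal h₁ h₂ => exact ⟨_, _, _, _, h₁, h₂, rfl, rfl⟩
  | node hr h => exact ⟨_, _, 0, 0, node hr h, nil, rfl, rfl⟩

theorem append_inv {β m s} : ∀ {α}, ParseForest g (α ++ β) m s →
    ∃ m₁ s₁ m₂ s₂, ParseForest g α m₁ s₁ ∧ ParseForest g β m₂ s₂ ∧
      m = m₁ + m₂ ∧ s = s₁ + s₂
  | [], h => ⟨0, 0, m, s, nil, h, by omega, by omega⟩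
  | x :: α, h => by
    obtain ⟨m₁, s₁, m₂, s₂, hx, hrest, rfl, rfl⟩ := cons_inv h
    obtain ⟨m₃, s₃, m₄, s₄, hα, hβ, rfl, rfl⟩ := append_inv hrest
    exact ⟨_, _, _, _, hx.append hα, hβ, by omega, by omega⟩

theorem exists_rule {n m s} (h : ParseForest g [.nonterminal n] m s) :
    ∃ r ∈ g.rules, r.input = n ∧ ∃ s', s = s' + 1 ∧ ParseForest g r.output m s' := by
  generalize hγ : [Symbol.nonterminal n] = γ at h
  induction h with
  | nil | terminal => simp at hγ
  | nonterminal _ h₂ ih _ =>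
    simp only [List.cons.injEq, Symbol.nonterminal.injEq] at hγ
    obtain ⟨rfl, rfl⟩ := hγ
    cases h₂
    exact ih rfl
  | @node r m s hr h =>
    obtain ⟨hn, -⟩ := List.cons_eq_cons.1 hγ
    exact ⟨r, hr, Symbol.nonterminal.inj hn.symm, s, rfl, h⟩

theorem derives {α m s} (h : ParseForest g α m s) :
    ∃ w : List T, w.length = m ∧ g.Derives α (w.map .terminal) := by
  induction h with
  | nil => exact ⟨[], rfl, .refl _⟩
  | terminal t _ ih =>
    obtain ⟨w, rfl, hw⟩ := ih
    exact ⟨t :: w, rfl, hw.append_left [.terminal t]⟩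
  | @nonterminal α n _ _ _ _ _ _ ih₁ ih₂ =>
    obtain ⟨w₁, rfl, hw₁⟩ := ih₁
    obtain ⟨w₂, rfl, hw₂⟩ := ih₂
    refine ⟨w₁ ++ w₂, List.length_append, ?_⟩
    rw [List.map_append]
    exact (hw₁.append_right α).trans (hw₂.append_left _)
  | node hr _ ih =>
    obtain ⟨w, rfl, hw⟩ := ih
    exact ⟨w, rfl, Produces.trans_derives ⟨_, hr, .input_output⟩ hw⟩

theorem of_terminals (w : List T) : ParseForest g (w.map .terminal) w.length 0 := by
  induction w with
  | nil => exact nil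
  | cons t w ih => exact ih.terminal t

theorem of_derives {α : List (Symbol T g.NT)} {w : List T}
    (h : g.Derives α (w.map .terminal)) : ∃ s, ParseForest g α w.length s := by
  induction h using Relation.ReflTransGen.head_induction_on with
  | refl => exact ⟨0, of_terminals w⟩
  | head hp _ ih =>
    obtain ⟨r, hr, hrw⟩ := hp
    obtain ⟨p, q, rfl, rfl⟩ := hrw.exists_parts
    obtain ⟨s, hs⟩ := ih
    obtain ⟨m₁, s₁, m₂, s₂, hpo, hq, hm, rfl⟩ := append_inv hs
    obtain ⟨m₃, s₃, m₄, s₄, hp, ho, rfl, rfl⟩ := append_inv hpo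
    exact ⟨_, ((hp.append (node hr ho)).append hq).of_eq hm.symm rfl⟩

end ParseForest

namespace ParseContext

theorem of_eq {α N m s m' s'} (h : ParseContext g α N m s) (hm : m = m') (hs : s = s') :
    ParseContext g α N m' s' :=
  hm ▸ hs ▸ h

theorem fill {α N e sc m s} (hc : ParseContext g α N e sc)
    (h : ParseForest g [.nonterminal N] m s) : ParseForest g α (e + m) (sc + s) := by
  induction hc with
  | hole => simpa using h
  | terminal t _ ih => exact ((ih h).terminal t).of_eq (by omega) rfl
  | left _ h₂ ih => exact ((ih h).nonterminal h₂).of_eq (by omega) (by omega)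
  | right h₁ _ ih => exact (h₁.nonterminal (ih h)).of_eq (by omega) (by omega)
  | node hr _ ih => exact (ParseForest.node hr (ih h)).of_eq rfl (by omega)

theorem trans {α N N' e sc e' sc'} (hc : ParseContext g α N e sc)
    (hc' : ParseContext g [.nonterminal N] N' e' sc') :
    ParseContext g α N' (e + e') (sc + sc') := by
  induction hc with
  | hole => simpa using hc'
  | terminal t _ ih => exact ((ih hc').terminal t).of_eq (by omega) rfl
  | left _ h₂ ih => exact ((ih hc').left h₂).of_eq (by omega) (by omega)
  | right h₁ _ ih => exact ((ih hc').right h₁).of_eq (by omega) (by omega)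
  | node hr _ ih => exact (node hr (ih hc')).of_eq rfl (by omega)

theorem pow {N e sc} (hc : ParseContext g [.nonterminal N] N e sc) (k : ℕ) :
    ParseContext g [.nonterminal N] N (k * e) (k * sc) := by
  induction k with
  | zero => simpa using hole N
  | succ k ih => exact (hc.trans ih).of_eq (by ring) (by ring)

end ParseContext

def widthBound (g : ContextFreeGrammar T) : ℕ :=
  (g.rules.sup fun r => r.output.length) + 1

theorem length_output_lt_widthBound {r : ContextFreeRule T g.NT} (hr : r ∈ g.rules) :
    r.output.length < g.widthBound :=
  Nat.lt_succ_of_le (Finset.le_sup (f := fun r => r.output.length) hr)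

theorem widthBound_pos : 0 < g.widthBound := Nat.succ_pos _

namespace ParseForest

theorem le_length_add_mul {α m s} (h : ParseForest g α m s) :
    m ≤ α.length + g.widthBound * s := by
  induction h with
  | nil => simp
  | terminal => simp only [List.length_cons]; omega
  | nonterminal _ _ ih₁ ih₂ =>
    simp only [List.length_cons, List.length_nil, Nat.mul_add] at ih₁ ih₂ ⊢
    omega
  | node hr _ ih =>
    have := length_output_lt_widthBound hr
    simp only [List.length_singleton, Nat.mul_succ]
    omega

theorem exists_large_subtree {α m s} (h : ParseForest g α m s) {b : ℕ}
    (hb : α.length * b < s) :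
    ∃ N e sc m' s', ParseContext g α N e sc ∧ ParseForest g [.nonterminal N] m' s' ∧
      m = e + m' ∧ s = sc + s' ∧ b < s' := by
  induction h with
  | nil => simp at hb
  | terminal t _ ih =>
    simp only [List.length_cons, Nat.succ_mul] at hb
    obtain ⟨N, e, sc, m', s', hc, hN, rfl, rfl, hs'⟩ := ih (by omega)
    exact ⟨N, e + 1, sc, m', s', hc.terminal t, hN, by omega, rfl, hs'⟩
  | @nonterminal α n m₁ s₁ m₂ s₂ h₁ h₂ _ ih₂ =>
    by_cases hs₁ : b < s₁
    · exact ⟨n, m₂, s₂, m₁, s₁, ((ParseContext.hole n).left h₂).of_eq (by omega) (by omega), h₁, by omega, by omega, hs₁⟩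
    simp only [List.length_cons, Nat.succ_mul] at hb
    obtain ⟨N, e, sc, m', s', hc, hN, rfl, rfl, hs'⟩ := ih₂ (by omega)
    exact ⟨N, m₁ + e, s₁ + sc, m', s', hc.right h₁, hN, by omega, by omega, hs'⟩
  | @node r m s hr h =>
    simp only [List.length_singleton, one_mul] at hb
    exact ⟨r.input, 0, 0, m, s + 1, .hole _, node hr h, by omega, by omega, hb⟩

theorem exists_large_child {n m s c} (h : ParseForest g [.nonterminal n] m s)
    (hs : g.widthBound ^ (c + 1) < s) :
    ∃ N e sc m' s', ParseContext g [.nonterminal n] N e sc ∧ 0 < sc ∧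
      ParseForest g [.nonterminal N] m' s' ∧ m = e + m' ∧ s = sc + s' ∧
      g.widthBound ^ c < s' := by
  obtain ⟨r, hr, rfl, s, rfl, hout⟩ := h.exists_rule
  have hwidth : (r.output.length + 1) * g.widthBound ^ c ≤ g.widthBound ^ (c + 1) := by
    rw [pow_succ']
    exact Nat.mul_le_mul_right _ (length_output_lt_widthBound hr)
  have hpos : 0 < g.widthBound ^ c := pow_pos widthBound_pos c
  obtain ⟨N, e, sc, m', s', hc, hN, rfl, rfl, hs'⟩ :=
    hout.exists_large_subtree (b := g.widthBound ^ c) (by rw [Nat.succ_mul] at hwidth; omega)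
  exact ⟨N, e, sc + 1, m', s', .node hr hc, by omega, hN, rfl, by omega, hs'⟩

end ParseForest

def HasProperSubtree (g : ContextFreeGrammar T) (n : g.NT) (m s : ℕ) (N : g.NT) : Prop :=
  ∃ e sc m' s', ParseContext g [.nonterminal n] N e sc ∧ 0 < sc ∧
    ParseForest g [.nonterminal N] m' s' ∧ m = e + m' ∧ s = sc + s'

def HasLoop (g : ContextFreeGrammar T) (n : g.NT) (m s : ℕ) : Prop :=
  ∃ N e sc m' s', ParseContext g [.nonterminal n] N e sc ∧ g.HasProperSubtree N m' s' N ∧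
    m = e + m' ∧ s = sc + s'

theorem HasProperSubtree.of_context {n N N' e sc m s} (hc : ParseContext g [.nonterminal n] N' e sc)
    (h : g.HasProperSubtree N' m s N) : g.HasProperSubtree n (e + m) (sc + s) N := by
  obtain ⟨e', sc', m', s', hc', hsc', hN, rfl, rfl⟩ := h
  exact ⟨e + e', sc + sc', m', s', hc.trans hc', by omega, hN, by omega, by omega⟩

theorem HasProperSubtree.hasLoop {n m s} (h : g.HasProperSubtree n m s n) : g.HasLoop n m s :=
  ⟨n, 0, 0, m, s, .hole n, h, by omega, by omega⟩

theorem HasLoop.of_context {n N e sc m s} (hc : ParseContext g [.nonterminal n] N e sc)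
    (h : g.HasLoop N m s) : g.HasLoop n (e + m) (sc + s) := by
  obtain ⟨N', e', sc', m', s', hc', hloop, rfl, rfl⟩ := h
  exact ⟨N', e + e', sc + sc', m', s', hc.trans hc', hloop, by omega, by omega⟩

theorem HasLoop.pump {n m s} (h : g.HasLoop n m s) :
    ∃ m₀ s₀ e sc, m = m₀ + e ∧ s = s₀ + sc ∧ 0 < sc ∧
      ∀ k, ParseForest g [.nonterminal n] (m₀ + k * e) (s₀ + k * sc) := by
  obtain ⟨N, e₁, sc₁, _, _, hc, hsub, rfl, rfl⟩ := h
  obtain ⟨e, sc, m₃, s₃, hloop, hsc, hN, rfl, rfl⟩ := hsub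
  exact ⟨e₁ + m₃, sc₁ + s₃, e, sc, by omega, by omega, hsc,
    fun k => ((hc.trans (hloop.pow k)).fill hN).of_eq (by ring) (by ring)⟩

namespace ParseForest

/-- Pigeonhole along a path of heavy children: `V` holds the nonterminals already met above `n`. -/
theorem hasLoop_or_hasProperSubtree [DecidableEq g.NT] {V : Finset g.NT} {n m s}
    (h : ParseForest g [.nonterminal n] m s) (hn : n ∉ V)
    (hs : g.widthBound ^ (g.rules.image ContextFreeRule.input \ V).card < s) :
    (∃ N ∈ V, g.HasProperSubtree n m s N) ∨ g.HasLoop n m s := by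
  induction s using Nat.strong_induction_on generalizing V n m with
  | _ s ih =>
  obtain ⟨r, hr, rfl, -⟩ := h.exists_rule
  have hcard : (g.rules.image ContextFreeRule.input \ V).card =
      (g.rules.image ContextFreeRule.input \ insert r.input V).card + 1 := by
    rw [Finset.sdiff_insert, Finset.card_erase_add_one
      (Finset.mem_sdiff.2 ⟨Finset.mem_image_of_mem _ hr, hn⟩)]
  rw [hcard] at hs
  obtain ⟨N, e, sc, m', s', hc, hsc, hN, rfl, rfl, hs'⟩ := h.exists_large_child hs
  have hsub : g.HasProperSubtree r.input (e + m') (sc + s') N :=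
    ⟨e, sc, m', s', hc, hsc, hN, rfl, rfl⟩
  by_cases hNn : N = r.input
  · rw [hNn] at hsub
    exact .inr hsub.hasLoop
  by_cases hNV : N ∈ V
  · exact .inl ⟨N, hNV, hsub⟩
  rcases ih s' (by omega) hN (by simp [hNn, hNV]) hs' with ⟨N', hN', hsub'⟩ | hloop
  · rcases Finset.mem_insert.1 hN' with rfl | hN'V
    · exact .inr (hsub'.of_context hc).hasLoop
    · exact .inl ⟨N', hN'V, hsub'.of_context hc⟩
  · exact .inr (hloop.of_context hc)

theorem hasLoop [DecidableEq g.NT] {n m s} (h : ParseForest g [.nonterminal n] m s)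
    (hs : g.widthBound ^ (g.rules.image ContextFreeRule.input).card < s) : g.HasLoop n m s := by
  simpa using h.hasLoop_or_hasProperSubtree (V := ∅) (Finset.notMem_empty n) (by simpa using hs)

/-- In a tree of minimal size for its yield, a loop cannot have empty yield, since cutting it out
would give a smaller tree. -/
theorem exists_pumping [DecidableEq g.NT] {n m s} (h : ParseForest g [.nonterminal n] m s)
    (hs : g.widthBound ^ (g.rules.image ContextFreeRule.input).card < s)
    (hmin : ∀ s' < s, ¬ ParseForest g [.nonterminal n] m s') :
    ∃ d, 0 < d ∧ ∀ k, ∃ s', ParseForest g [.nonterminal n] (m + k * d) s' := by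
  obtain ⟨m₀, s₀, d, sc, rfl, rfl, hsc, hpump⟩ := (h.hasLoop hs).pump
  refine ⟨d, Nat.pos_of_ne_zero fun hd => hmin s₀ (by omega) ?_,
    fun k => ⟨_, (hpump (k + 1)).of_eq (by ring) rfl⟩⟩
  simpa [hd] using hpump 0

end ParseForest

end ContextFreeGrammar

theorem Language.IsContextFree.exists_lengths_arithmetic_progression {T : Type*}
    {L : Language T} (hL : L.IsContextFree) (hunbounded : ∀ n, ∃ w ∈ L, n ≤ w.length) :
    ∃ a d, 0 < d ∧ ∀ k, ∃ w ∈ L, w.length = a + k * d := by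
  classical
  obtain ⟨g, rfl⟩ := hL
  set c := (g.rules.image ContextFreeRule.input).card
  obtain ⟨w, hw, hlen⟩ := hunbounded (2 + g.widthBound * g.widthBound ^ c)
  have hex : ∃ s, g.ParseForest [.nonterminal g.initial] w.length s :=
    ContextFreeGrammar.ParseForest.of_derives hw
  have hD := Nat.find_spec hex
  have hlarge : g.widthBound ^ c < Nat.find hex := by
    have := hD.le_length_add_mul
    by_contra! hle
    have := Nat.mul_le_mul_left g.widthBound hle
    simp only [List.length_singleton] at *
    omega
  obtain ⟨d, hd, hpump⟩ := hD.exists_pumping hlarge fun s' hs' => Nat.find_min hex hs'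
  refine ⟨w.length, d, hd, fun k => ?_⟩
  obtain ⟨s', hs'⟩ := hpump k
  obtain ⟨w', hw'len, hw'⟩ := hs'.derives
  exact ⟨w', hw', hw'len⟩

/-- Take `f j ≥ a` with `f (j + 1) - f j > d`; the first term of the progression above `f j` falls
strictly between `f j` and `f (j + 1)`. -/
theorem Monotone.exists_add_mul_notMem_range {f : ℕ → ℕ} (hf : Monotone f)
    (hgap : Tendsto (fun n => f (n + 1) - f n) atTop atTop) (a : ℕ) {d : ℕ} (hd : 0 < d) :
    ∃ k, a + k * d ∉ Set.range f := by
  obtain ⟨j, hja, hjd⟩ : ∃ j, a ≤ f j ∧ f j + d < f (j + 1) := by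
    obtain ⟨n, hgap₁, hgap₀⟩ := (((tendsto_add_atTop_iff_nat 1).2 hgap).eventually_gt_atTop d
      |>.and (hgap.eventually_ge_atTop a)).exists
    exact ⟨n + 1, by omega, by omega⟩
  refine ⟨(f j - a) / d + 1, fun ⟨i, hi⟩ => ?_⟩
  have hdiv := Nat.div_add_mod (f j - a) d
  have hmod := Nat.mod_lt (f j - a) hd
  rw [add_one_mul, mul_comm] at hi
  rcases le_or_gt i j with hij | hij
  · have := hf hij
    omega
  · have := hf (show j + 1 ≤ i by omega)
    omega

theorem fib1_eq_fib : ∀ n, fib1 n = Nat.fib (n + 1)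
  | 0 => rfl
  | 1 => rfl
  | n + 2 => by rw [fib1, fib1_eq_fib n, fib1_eq_fib (n + 1), Nat.fib_add_two (n := n + 1)]; ring

theorem fib1_monotone : Monotone fib1 := fun a b hab => by
  simpa only [fib1_eq_fib] using Nat.fib_mono (Nat.succ_le_succ hab)

theorem tendsto_fib1_sub : Tendsto (fun n => fib1 (n + 1) - fib1 n) atTop atTop := by
  simp only [fib1_eq_fib, Nat.fib_add_two_sub_fib_add_one]
  exact tendsto_atTop_mono (fun n => by have := Nat.le_fib_add_one n; omega)
    (tendsto_sub_atTop_nat 1)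

theorem fib_lengths_not_context_free :
    ¬ Language.IsContextFree
      ({ w : List (Fin 1) | ∃ n : ℕ, w = List.replicate (fib1 n) 0 } : Language (Fin 1)) := by
  intro hcf
  obtain ⟨a, d, hd, hprog⟩ := hcf.exists_lengths_arithmetic_progression fun n =>
    ⟨List.replicate (fib1 n) 0, ⟨n, rfl⟩, by
      simpa [fib1_eq_fib] using Nat.le_fib_add_one (n + 1)⟩
  obtain ⟨k, hk⟩ := fib1_monotone.exists_add_mul_notMem_range tendsto_fib1_sub a hd
  obtain ⟨w, ⟨i, rfl⟩, hw⟩ := hprog k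
  exact hk ⟨i, by simpa using hw⟩
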